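/- For every standard Young tableau T of skew shape λ/μ with n = |λ/μ| cells and every i ∈ {1,…,n−2}: i ∈ Des(T) if and only if i ∈ Des(Rot_SE(T)). That is, the southeast rotation preserves the descent set restricted to {1,…,n−2}. -/

import Mathlib

/-!
Common definitions for skew shapes, standard Young tableaux, the southeast
boundary, southeast min-unimodal sets, the southeast rotation `Rot_SE`,
balance, balance points, and the map `Θ`, following the paper.

Cells are pairs `(i, j) : ℕ × ℕ` (row `i` counted from the top, column `j`
counted from the left).  South means larger row index, east means larger
column index.
-/

open scoped Classical

namespace SkewSE

abbrev Cell : Type := ℕ × ℕ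

/-- `a` is weakly southwest of `b`: weakly south (row ≥) and weakly west (col ≤). -/
def weakSW (a b : Cell) : Prop := b.1 ≤ a.1 ∧ a.2 ≤ b.2

/-- `a` is strictly southwest of `b`: strictly south and strictly west. -/
def strictSW (a b : Cell) : Prop := b.1 < a.1 ∧ a.2 < b.2

/-- The (strict) southwest-to-northeast order on cells:
`a` comes before `b` if `a` is weakly southwest of `b` and `a ≠ b`. -/
def swLT (a b : Cell) : Prop := weakSW a b ∧ a ≠ b

/-- Two cells are adjacent if they share an edge. -/
def adjacent (a b : Cell) : Prop :=
  (a.1 = b.1 ∧ (a.2 = b.2 + 1 ∨ b.2 = a.2 + 1)) ∨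
  (a.2 = b.2 ∧ (a.1 = b.1 + 1 ∨ b.1 = a.1 + 1))

/-- `a` and `b` lie in the same connected component of the set of cells `P`
(with respect to edge-adjacency). -/
def sameComp (P : Finset Cell) (a b : Cell) : Prop :=
  a ∈ P ∧ b ∈ P ∧ Relation.ReflTransGen (fun x y => x ∈ P ∧ y ∈ P ∧ adjacent x y) a b

/-- The cells of the skew shape `λ/μ`. -/
def skewCells (lam mu : YoungDiagram) : Finset Cell := lam.cells \ mu.cells

/-- `n = |λ/μ|`, the number of cells. -/
def numCells (lam mu : YoungDiagram) : ℕ := (skewCells lam mu).card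

/-- A set of cells is a skew shape if it is the difference of two Young diagrams. -/
def IsSkewShape (P : Finset Cell) : Prop :=
  ∃ lam' mu' : YoungDiagram, mu' ≤ lam' ∧ P = lam'.cells \ mu'.cells

/-- A standard Young tableau of skew shape `λ/μ`: a bijective filling of the
cells by `{1,…,n}`, strictly increasing west-to-east along rows and
north-to-south down columns.  (Entries are `0` off the shape.) -/
structure SYT (lam mu : YoungDiagram) where
  entry : Cell → ℕ
  bijOn : Set.BijOn entry (skewCells lam mu : Set Cell)
    ((Finset.Icc 1 (numCells lam mu) : Finset ℕ) : Set ℕ)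
  row_lt : ∀ i j : ℕ, (i, j) ∈ skewCells lam mu → (i, j + 1) ∈ skewCells lam mu →
    entry (i, j) < entry (i, j + 1)
  col_lt : ∀ i j : ℕ, (i, j) ∈ skewCells lam mu → (i + 1, j) ∈ skewCells lam mu →
    entry (i, j) < entry (i + 1, j)
  zero_outside : ∀ c : Cell, c ∉ skewCells lam mu → entry c = 0

variable {lam mu : YoungDiagram}

/-- `pos T x` is the cell of `T` containing the entry `x`. -/
noncomputable def pos (T : SYT lam mu) (x : ℕ) : Cell :=
  if h : ∃ c ∈ skewCells lam mu, T.entry c = x then h.choose else (0, 0)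

/-- The southeast boundary of `λ/μ`: cells `(i,j)` with `(i+1, j+1) ∉ λ/μ`. -/
def SEboundary (lam mu : YoungDiagram) : Finset Cell :=
  (skewCells lam mu).filter (fun c => (c.1 + 1, c.2 + 1) ∉ skewCells lam mu)

/-- `S` is southeast min-unimodal in `T`: the cells `pos_T(S)` lie on the
southeast boundary, in a single connected component of `λ/μ`, are totally
ordered southwest-to-northeast, and the entries, read in the
southwest-to-northeast order of their cells, strictly decrease until
reaching `min S` and then strictly increase. -/
def MinUnimodalSE (T : SYT lam mu) (S : Finset ℕ) : Prop :=
  ∃ hne : S.Nonempty,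
    S ⊆ Finset.Icc 1 (numCells lam mu) ∧
    (∀ x ∈ S, pos T x ∈ SEboundary lam mu) ∧
    (∀ x ∈ S, ∀ y ∈ S, sameComp (skewCells lam mu) (pos T x) (pos T y)) ∧
    (∀ x ∈ S, ∀ y ∈ S, weakSW (pos T x) (pos T y) ∨ weakSW (pos T y) (pos T x)) ∧
    (∀ x ∈ S, ∀ y ∈ S, swLT (pos T x) (pos T y) →
      (weakSW (pos T y) (pos T (S.min' hne)) → y < x) ∧
      (weakSW (pos T (S.min' hne)) (pos T x) → x < y))

/-- `k` such that `Rc_SE(T) = {n-k+1, …, n}`: the maximal `k ≥ 1` for which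
this set is southeast min-unimodal in `T`. -/
noncomputable def kSE (T : SYT lam mu) : ℕ :=
  sSup {k : ℕ | 1 ≤ k ∧ k ≤ numCells lam mu ∧
    MinUnimodalSE T (Finset.Icc (numCells lam mu - k + 1) (numCells lam mu))}

/-- `Rc_SE(T) = {n-k+1, …, n}` with `k` maximal as above. -/
noncomputable def RcSE (T : SYT lam mu) : Finset ℕ :=
  Finset.Icc (numCells lam mu - kSE T + 1) (numCells lam mu)

/-- `Rp_SE(T) = pos_T(Rc_SE(T))`. -/
noncomputable def RpSE (T : SYT lam mu) : Finset Cell := (RcSE T).image (pos T)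

/-- `Y = pos_T(min Rc_SE(T))`. -/
noncomputable def Ycell (T : SYT lam mu) : Cell :=
  pos T (numCells lam mu - kSE T + 1)

/-- The position of the largest entry `n`. -/
noncomputable def posN (T : SYT lam mu) : Cell := pos T (numCells lam mu)

/-- `pos_T(n)` is the southwesternmost cell of `Rp_SE(T)`. -/
def SWmostAtN (T : SYT lam mu) : Prop := ∀ c ∈ RpSE T, weakSW (posN T) c

/-- `pos_T(n)` is the northeasternmost cell of `Rp_SE(T)`. -/
def NEmostAtN (T : SYT lam mu) : Prop := ∀ c ∈ RpSE T, weakSW c (posN T)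

/-- The southernmost cell of `P` in the column of `Y`. -/
noncomputable def southEnd (P : Finset Cell) (Y : Cell) : Cell :=
  if h : ∃ c ∈ P, c.2 = Y.2 ∧ ∀ d ∈ P, d.2 = Y.2 → d.1 ≤ c.1 then h.choose else Y

/-- The easternmost cell of `P` in the row of `Y`. -/
noncomputable def eastEnd (P : Finset Cell) (Y : Cell) : Cell :=
  if h : ∃ c ∈ P, c.1 = Y.1 ∧ ∀ d ∈ P, d.1 = Y.1 → d.2 ≤ c.2 then h.choose else Y

/-- The southeast rotation endpoint `X` of `T`. -/
noncomputable def Xend (T : SYT lam mu) : Cell :=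
  if SWmostAtN T then
    if ∃ c ∈ RpSE T, c.2 = (Ycell T).2 ∧ (Ycell T).1 < c.1 then
      southEnd (RpSE T) (Ycell T)
    else eastEnd (RpSE T) (Ycell T)
  else
    if ∃ c ∈ RpSE T, c.1 = (Ycell T).1 ∧ (Ycell T).2 < c.2 then
      eastEnd (RpSE T) (Ycell T)
    else southEnd (RpSE T) (Ycell T)

/-- The cells `Z_1, …, Z_j` of `Rp_SE(T)` lying weakly between `pos_T(n)`
and `X` in the southwest-to-northeast order. -/
noncomputable def chainSE (T : SYT lam mu) : Finset Cell :=
  (RpSE T).filter (fun c =>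
    (weakSW (posN T) c ∧ weakSW c (Xend T)) ∨ (weakSW (Xend T) c ∧ weakSW c (posN T)))

/-- The next cell of `P` after `c` in southwest-to-northeast order. -/
noncomputable def nextNE (P : Finset Cell) (c : Cell) : Cell :=
  if h : ∃ d ∈ P, swLT c d ∧ ∀ e ∈ P, swLT c e → weakSW d e then h.choose else c

/-- The next cell of `P` before `c` in southwest-to-northeast order. -/
noncomputable def nextSW (P : Finset Cell) (c : Cell) : Cell :=
  if h : ∃ d ∈ P, swLT d c ∧ ∀ e ∈ P, swLT e c → weakSW e d then h.choose else c

/-- The filling `Rot_SE(T)` produced by the southeast rotation: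
`n` moves to `X`, and the entries of the cells of `Rp_SE(T)` weakly between
`pos_T(n)` and `X` are each shifted one position towards `pos_T(n)`;
all other entries are unchanged. -/
noncomputable def rotEntry (T : SYT lam mu) (c : Cell) : ℕ :=
  if c ∈ chainSE T then
    if c = Xend T then numCells lam mu
    else if SWmostAtN T then T.entry (nextNE (chainSE T) c)
    else T.entry (nextSW (chainSE T) c)
  else T.entry c

/-- The southeast rotation as a map `SYT(λ/μ) → SYT(λ/μ)`
(well-defined since the rotated filling is again standard). -/
noncomputable def RotSE (T : SYT lam mu) : SYT lam mu :=
  if h : ∃ R : SYT lam mu, R.entry = rotEntry T then h.choose else T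

/-- The descent set `Des(T) = {i : pos_T(i+1) is strictly south of pos_T(i)}`. -/
noncomputable def Des (T : SYT lam mu) : Finset ℕ :=
  (Finset.Icc 1 (numCells lam mu - 1)).filter
    (fun i => (pos T i).1 < (pos T (i + 1)).1)

/-- `S` is balanced with respect to `W` in `U`: the entries in the cells of
`pos_U(S)` weakly northeast of `W` increase from southwest to northeast, and
the entries in the cells of `pos_U(S)` weakly southwest of `W` increase from
northeast to southwest. -/
def Balanced (U : SYT lam mu) (S : Finset ℕ) (W : Cell) : Prop :=
  (∀ x ∈ S, ∀ y ∈ S, weakSW W (pos U x) → weakSW W (pos U y) →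
    swLT (pos U x) (pos U y) → x < y) ∧
  (∀ x ∈ S, ∀ y ∈ S, weakSW (pos U x) W → weakSW (pos U y) W →
    swLT (pos U y) (pos U x) → x < y)

/-- `a` and `b` are distinct and consecutive in the southwest-to-northeast
order on the set of cells `Q`. -/
def consecutiveIn (Q : Finset Cell) (a b : Cell) : Prop :=
  a ∈ Q ∧ b ∈ Q ∧ (swLT a b ∨ swLT b a) ∧
  ∀ c ∈ Q, ¬ (swLT a c ∧ swLT c b) ∧ ¬ (swLT b c ∧ swLT c a)

/-- The northern balance point of a southeast exterior corner `Z`: the cell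
of the southeast boundary weakly due north of `Z` farthest from `Z`. -/
noncomputable def northBP (lam mu : YoungDiagram) (Z : Cell) : Cell :=
  if h : ∃ c ∈ SEboundary lam mu, c.2 = Z.2 ∧ c.1 ≤ Z.1 ∧
      ∀ d ∈ SEboundary lam mu, d.2 = Z.2 → d.1 ≤ Z.1 → c.1 ≤ d.1
  then h.choose else Z

/-- The western balance point of a southeast exterior corner `Z`: the cell
of the southeast boundary weakly due west of `Z` farthest from `Z`. -/
noncomputable def westBP (lam mu : YoungDiagram) (Z : Cell) : Cell :=
  if h : ∃ c ∈ SEboundary lam mu, c.1 = Z.1 ∧ c.2 ≤ Z.2 ∧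
      ∀ d ∈ SEboundary lam mu, d.1 = Z.1 → d.2 ≤ Z.2 → c.2 ≤ d.2
  then h.choose else Z

/-- Property (i) for `S = {n-1, …, n-k+1}` in `R`:
`S` is southeast min-unimodal in `R` and lies in the same connected
component of `λ/μ` as `pos_R(n)` (vacuous when `S` is empty, i.e. `k = 1`). -/
def PropI (R : SYT lam mu) (k : ℕ) : Prop :=
  (Finset.Icc (numCells lam mu - k + 1) (numCells lam mu - 1)).Nonempty →
    MinUnimodalSE R (Finset.Icc (numCells lam mu - k + 1) (numCells lam mu - 1)) ∧
    ∀ x ∈ Finset.Icc (numCells lam mu - k + 1) (numCells lam mu - 1),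
      sameComp (skewCells lam mu) (pos R x) (pos R (numCells lam mu))

/-- `pos_R(S)` contains the northern neighbor of `pos_R(n)`,
for `S = {n-1, …, n-k+1}`. -/
def hasNorthNbr (R : SYT lam mu) (k : ℕ) : Prop :=
  ∃ x ∈ Finset.Icc (numCells lam mu - k + 1) (numCells lam mu - 1),
    (pos R x).2 = (pos R (numCells lam mu)).2 ∧
    (pos R x).1 + 1 = (pos R (numCells lam mu)).1

/-- `pos_R(S)` contains the western neighbor of `pos_R(n)`,
for `S = {n-1, …, n-k+1}`. -/
def hasWestNbr (R : SYT lam mu) (k : ℕ) : Prop :=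
  ∃ x ∈ Finset.Icc (numCells lam mu - k + 1) (numCells lam mu - 1),
    (pos R x).1 = (pos R (numCells lam mu)).1 ∧
    (pos R x).2 + 1 = (pos R (numCells lam mu)).2

/-- Property (ii) for `S = {n-1, …, n-k+1}` in `R`. -/
def PropII (R : SYT lam mu) (k : ℕ) : Prop :=
  ¬ (hasNorthNbr R k ∧ hasWestNbr R k) ∧
  (hasNorthNbr R k →
    Balanced R (Finset.Icc (numCells lam mu - k + 1) (numCells lam mu - 1))
      (northBP lam mu (pos R (numCells lam mu)))) ∧
  (hasWestNbr R k →
    Balanced R (Finset.Icc (numCells lam mu - k + 1) (numCells lam mu - 1))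
      (westBP lam mu (pos R (numCells lam mu)))) ∧
  (¬ hasNorthNbr R k → ¬ hasWestNbr R k →
    Balanced R (Finset.Icc (numCells lam mu - k + 1) (numCells lam mu - 1))
      (northBP lam mu (pos R (numCells lam mu))) ∧
    Balanced R (Finset.Icc (numCells lam mu - k + 1) (numCells lam mu - 1))
      (westBP lam mu (pos R (numCells lam mu))))

/-- The maximal `k` such that `S = {n-1, …, n-k+1}` satisfies properties
(i) and (ii) in `R`; used to define `Θ`. -/
noncomputable def kTheta (R : SYT lam mu) : ℕ :=
  sSup {k : ℕ | 1 ≤ k ∧ k ≤ numCells lam mu ∧ PropI R k ∧ PropII R k}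

/-- The southwesternmost cell of `P`. -/
noncomputable def SWend (P : Finset Cell) : Cell :=
  if h : ∃ c ∈ P, ∀ d ∈ P, weakSW c d then h.choose else (0, 0)

/-- The northeasternmost cell of `P`. -/
noncomputable def NEend (P : Finset Cell) : Cell :=
  if h : ∃ c ∈ P, ∀ d ∈ P, weakSW d c then h.choose else (0, 0)

/-- `P = pos_R({n, …, n-k+1})` for `k = kTheta R`. -/
noncomputable def PTheta (R : SYT lam mu) : Finset Cell :=
  (Finset.Icc (numCells lam mu - kTheta R + 1) (numCells lam mu)).image (pos R)

/-- `pos_R(n - k + 1)` for `k = kTheta R`. -/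
noncomputable def posMTheta (R : SYT lam mu) : Cell :=
  pos R (numCells lam mu - kTheta R + 1)

/-- `Θ` moves `n` to the southwestern end exactly when: `pos_R(n)` and
`pos_R(n-k+1)` lie in different connected components of `P` and
`pos_R(n-k+1)` is on the southwestern side, or they lie in the same
connected component and `pos_R(n-k+1)` is on the northeastern side. -/
def destIsSW (R : SYT lam mu) : Prop :=
  weakSW (posMTheta R) (posN R) ↔ ¬ sameComp (PTheta R) (posN R) (posMTheta R)

/-- The destination cell for `n` under `Θ`. -/
noncomputable def destTheta (R : SYT lam mu) : Cell :=
  if destIsSW R then SWend (PTheta R) else NEend (PTheta R)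

/-- The cells of `P` weakly between the destination cell and `pos_R(n)`. -/
noncomputable def chainTheta (R : SYT lam mu) : Finset Cell :=
  (PTheta R).filter (fun c =>
    (weakSW (destTheta R) c ∧ weakSW c (posN R)) ∨
    (weakSW (posN R) c ∧ weakSW c (destTheta R)))

/-- The filling `Θ(R)`: `n` moves from `pos_R(n)` to the destination cell,
and each entry occupying a cell of `P` strictly between them is shifted one
position in `P` closer to `pos_R(n)`; all other entries are unchanged. -/
noncomputable def thetaEntry (R : SYT lam mu) (c : Cell) : ℕ :=
  if c ∈ chainTheta R then
    if c = destTheta R then numCells lam mu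
    else if destIsSW R then R.entry (nextSW (chainTheta R) c)
    else R.entry (nextNE (chainTheta R) c)
  else R.entry c

/-- The map `Θ` as a map on standard Young tableaux. -/
noncomputable def Theta (R : SYT lam mu) : SYT lam mu :=
  if h : ∃ U : SYT lam mu, U.entry = thetaEntry R then h.choose else R

/-- A single-column rectangle with northern endpoint `Y` and southern endpoint `X`. -/
def IsColSeg (P : Finset Cell) (Y X : Cell) : Prop :=
  Y.2 = X.2 ∧ Y.1 ≤ X.1 ∧ P = (Finset.Icc Y.1 X.1).image (fun i => (i, Y.2))

/-- A single-row rectangle with western endpoint `Y` and eastern endpoint `X`. -/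
def IsRowSeg (P : Finset Cell) (Y X : Cell) : Prop :=
  Y.1 = X.1 ∧ Y.2 ≤ X.2 ∧ P = (Finset.Icc Y.2 X.2).image (fun j => (Y.1, j))

/-- A hook with northwestern corner `Y`, southern endpoint `A`, and eastern
endpoint `B` (both arms of positive length). -/
def IsHook (P : Finset Cell) (Y A B : Cell) : Prop :=
  A.2 = Y.2 ∧ Y.1 < A.1 ∧ B.1 = Y.1 ∧ Y.2 < B.2 ∧
  P = (Finset.Icc Y.1 A.1).image (fun i => (i, Y.2)) ∪
      (Finset.Icc Y.2 B.2).image (fun j => (Y.1, j))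

end SkewSE

/-!
In the southwest case the rotation slides the entries of an initial segment `C` of
`Rp_SE(T)` one cell southwest. Only descents involving a moved entry can change. Moved
entries on the southwest arm of the min-unimodal chain go strictly south, while the part of
`C` on the northeast arm stays in the row of `Y`, so the relative rows of `i` and `i + 1`
are preserved. The one delicate case, `i + 1 = min Rc_SE(T)`, is settled by maximality:
otherwise `i` could be adjoined to `Rc_SE(T)`. The northeast case is the transpose of the
southwest one, and transposition complements descents.
-/

namespace SkewSE

variable {lam mu : YoungDiagram}

section CellOrder

theorem weakSW_refl (a : Cell) : weakSW a a := ⟨le_rfl, le_rfl⟩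

theorem weakSW_trans {a b c : Cell} (hab : weakSW a b) (hbc : weakSW b c) : weakSW a c :=
  ⟨hbc.1.trans hab.1, hab.2.trans hbc.2⟩

theorem weakSW_antisymm {a b : Cell} (hab : weakSW a b) (hba : weakSW b a) : a = b :=
  Prod.ext (hba.1.antisymm hab.1) (hab.2.antisymm hba.2)

theorem not_weakSW_of_swLT {a b : Cell} (hab : swLT a b) : ¬ weakSW b a :=
  fun hba => hab.2 (weakSW_antisymm hab.1 hba)

theorem swLT_of_not_weakSW {a b : Cell} (hab : weakSW a b ∨ weakSW b a) (h : ¬ weakSW a b) :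
    swLT b a :=
  ⟨hab.resolve_left h, fun he => h (he ▸ weakSW_refl b)⟩

theorem weakSW_swap_swap {a b : Cell} : weakSW a.swap b.swap ↔ weakSW b a :=
  and_comm

theorem swLT_swap_swap {a b : Cell} : swLT a.swap b.swap ↔ swLT b a := by
  simp only [swLT, weakSW_swap_swap, ne_eq, Prod.swap_inj]
  exact and_congr_right' ne_comm

/-- On a chain, `weakSW` is detected by the antidiagonal coordinate `col - row`. -/
theorem weakSW_of_isChain_of_le {P : Set Cell} (hP : IsChain weakSW P) {a b : Cell}
    (ha : a ∈ P) (hb : b ∈ P) (hab : (a.2 : ℤ) - a.1 ≤ b.2 - b.1) : weakSW a b := by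
  rcases eq_or_ne a b with rfl | hne
  · exact weakSW_refl a
  rcases hP ha hb hne with h | ⟨h1, h2⟩
  · exact h
  · exact absurd (Prod.ext (by omega) (by omega)) hne

theorem exists_weakSW_greatest {P : Finset Cell} (hP : IsChain weakSW (P : Set Cell))
    (hne : P.Nonempty) : ∃ m ∈ P, ∀ a ∈ P, weakSW a m := by
  obtain ⟨m, hm, hmax⟩ := P.exists_max_image (fun c : Cell => (c.2 : ℤ) - c.1) hne
  exact ⟨m, hm, fun a ha => weakSW_of_isChain_of_le hP ha hm (hmax a ha)⟩

theorem exists_weakSW_least {P : Finset Cell} (hP : IsChain weakSW (P : Set Cell))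
    (hne : P.Nonempty) : ∃ m ∈ P, ∀ a ∈ P, weakSW m a := by
  obtain ⟨m, hm, hmin⟩ := P.exists_min_image (fun c : Cell => (c.2 : ℤ) - c.1) hne
  exact ⟨m, hm, fun a ha => weakSW_of_isChain_of_le hP hm ha (hmin a ha)⟩

end CellOrder

section Neighbours

def IsNextSW (C : Finset Cell) (c b : Cell) : Prop :=
  b ∈ C ∧ swLT b c ∧ ∀ e ∈ C, swLT e c → weakSW e b

def IsNextNE (C : Finset Cell) (c b : Cell) : Prop :=
  b ∈ C ∧ swLT c b ∧ ∀ e ∈ C, swLT c e → weakSW b e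

variable {C : Finset Cell} {b c : Cell}

theorem IsNextSW.nextSW_eq (h : IsNextSW C c b) : nextSW C c = b := by
  unfold nextSW
  split_ifs with hex
  · obtain ⟨hd, hdc, hdmax⟩ := hex.choose_spec
    exact weakSW_antisymm (h.2.2 _ hd hdc) (hdmax b h.1 h.2.1)
  · exact absurd ⟨b, h⟩ hex

theorem IsNextNE.nextNE_eq (h : IsNextNE C c b) : nextNE C c = b := by
  unfold nextNE
  split_ifs with hex
  · obtain ⟨hd, hcd, hdmin⟩ := hex.choose_spec
    exact weakSW_antisymm (hdmin b h.1 h.2.1) (h.2.2 _ hd hcd)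
  · exact absurd ⟨b, h⟩ hex

theorem isNextSW_nextSW (hC : IsChain weakSW (C : Set Cell)) (hex : ∃ e ∈ C, swLT e c) :
    IsNextSW C c (nextSW C c) := by
  obtain ⟨e, he, hec⟩ := hex
  obtain ⟨d, hd, hdmax⟩ := exists_weakSW_greatest (P := C.filter (swLT · c))
    (hC.mono (Finset.coe_subset.mpr (Finset.filter_subset _ _)))
    ⟨e, Finset.mem_filter.mpr ⟨he, hec⟩⟩
  rw [Finset.mem_filter] at hd
  have hnext : IsNextSW C c d :=
    ⟨hd.1, hd.2, fun e he hec => hdmax e (Finset.mem_filter.mpr ⟨he, hec⟩)⟩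
  rwa [hnext.nextSW_eq]

theorem isNextNE_nextNE (hC : IsChain weakSW (C : Set Cell)) (hex : ∃ e ∈ C, swLT c e) :
    IsNextNE C c (nextNE C c) := by
  obtain ⟨e, he, hce⟩ := hex
  obtain ⟨d, hd, hdmin⟩ := exists_weakSW_least (P := C.filter (swLT c ·))
    (hC.mono (Finset.coe_subset.mpr (Finset.filter_subset _ _)))
    ⟨e, Finset.mem_filter.mpr ⟨he, hce⟩⟩
  rw [Finset.mem_filter] at hd
  have hnext : IsNextNE C c d :=
    ⟨hd.1, hd.2, fun e he hce => hdmin e (Finset.mem_filter.mpr ⟨he, hce⟩)⟩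
  rwa [hnext.nextNE_eq]

theorem IsNextSW.isNextNE (h : IsNextSW C c b) (hC : IsChain weakSW (C : Set Cell))
    (hc : c ∈ C) : IsNextNE C b c := by
  refine ⟨hc, h.2.1, fun e he hbe => ?_⟩
  rcases eq_or_ne e c with rfl | hec
  · exact weakSW_refl e
  rcases hC hc he hec.symm with hce | hec'
  · exact hce
  · exact absurd (h.2.2 e he ⟨hec', hec⟩) (not_weakSW_of_swLT hbe)

theorem IsNextNE.isNextSW (h : IsNextNE C c b) (hC : IsChain weakSW (C : Set Cell))
    (hc : c ∈ C) : IsNextSW C b c := by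
  refine ⟨hc, h.2.1, fun e he heb => ?_⟩
  rcases eq_or_ne e c with rfl | hec
  · exact weakSW_refl e
  rcases hC he hc hec with hec' | hce
  · exact hec'
  · exact absurd (h.2.2 e he ⟨hce, hec.symm⟩) (not_weakSW_of_swLT heb)

theorem IsNextNE.image_swap (h : IsNextNE C c b) :
    IsNextSW (C.image Prod.swap) c.swap b.swap := by
  refine ⟨Finset.mem_image_of_mem _ h.1, swLT_swap_swap.mpr h.2.1, fun e he hec => ?_⟩
  obtain ⟨d, hd, rfl⟩ := Finset.mem_image.mp he
  exact weakSW_swap_swap.mpr (h.2.2 d hd (swLT_swap_swap.mp hec))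

end Neighbours

section Tableaux

theorem mem_skewCells_of_le_of_le {a b c : Cell} (ha : a ∈ skewCells lam mu)
    (hb : b ∈ skewCells lam mu) (hac : a ≤ c) (hcb : c ≤ b) : c ∈ skewCells lam mu := by
  simp only [skewCells, Finset.mem_sdiff, YoungDiagram.mem_cells] at *
  exact ⟨lam.up_left_mem hcb.1 hcb.2 hb.1, fun hc => ha.2 (mu.up_left_mem hac.1 hac.2 hc)⟩

namespace SYT

variable (T : SYT lam mu) {c : Cell}

theorem entry_lt_of_snd_lt {r c₁ c₂ : ℕ} (h₁ : (r, c₁) ∈ skewCells lam mu)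
    (h₂ : (r, c₂) ∈ skewCells lam mu) (h : c₁ < c₂) :
    T.entry (r, c₁) < T.entry (r, c₂) := by
  induction c₂, h using Nat.le_induction with
  | base => exact T.row_lt r c₁ h₁ h₂
  | succ c hc ih =>
    have hmid : (r, c) ∈ skewCells lam mu :=
      mem_skewCells_of_le_of_le h₁ h₂ ⟨le_rfl, by omega⟩ ⟨le_rfl, by omega⟩
    exact (ih hmid).trans (T.row_lt r c hmid h₂)

theorem entry_lt_of_fst_lt {r₁ r₂ c : ℕ} (h₁ : (r₁, c) ∈ skewCells lam mu)
    (h₂ : (r₂, c) ∈ skewCells lam mu) (h : r₁ < r₂) :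
    T.entry (r₁, c) < T.entry (r₂, c) := by
  induction r₂, h using Nat.le_induction with
  | base => exact T.col_lt r₁ c h₁ h₂
  | succ r hr ih =>
    have hmid : (r, c) ∈ skewCells lam mu :=
      mem_skewCells_of_le_of_le h₁ h₂ ⟨by omega, le_rfl⟩ ⟨by omega, le_rfl⟩
    exact (ih hmid).trans (T.col_lt r c hmid h₂)

theorem strictMonoOn_entry : StrictMonoOn T.entry (skewCells lam mu : Set Cell) := by
  rintro ⟨a₁, a₂⟩ ha ⟨b₁, b₂⟩ hb hab
  have hc : (a₁, b₂) ∈ skewCells lam mu :=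
    mem_skewCells_of_le_of_le ha hb ⟨le_rfl, hab.le.2⟩ ⟨hab.le.1, le_rfl⟩
  rcases Prod.lt_iff.mp hab with ⟨h₁, h₂⟩ | ⟨h₁, h₂⟩
  · rcases h₂.eq_or_lt with rfl | h₂
    · exact T.entry_lt_of_fst_lt ha hb h₁
    · exact (T.entry_lt_of_snd_lt ha hc h₂).trans (T.entry_lt_of_fst_lt hc hb h₁)
  · rcases h₁.eq_or_lt with rfl | h₁
    · exact T.entry_lt_of_snd_lt ha hb h₂
    · exact (T.entry_lt_of_snd_lt ha hc h₂).trans (T.entry_lt_of_fst_lt hc hb h₁)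

theorem entry_mem (hc : c ∈ skewCells lam mu) : T.entry c ∈ Finset.Icc 1 (numCells lam mu) :=
  T.bijOn.mapsTo hc

end SYT

variable {T : SYT lam mu} {x y : ℕ} {c : Cell}

theorem pos_mem_and_entry_pos (hx : x ∈ Finset.Icc 1 (numCells lam mu)) :
    pos T x ∈ skewCells lam mu ∧ T.entry (pos T x) = x := by
  have h : ∃ c ∈ skewCells lam mu, T.entry c = x := T.bijOn.surjOn (Finset.mem_coe.mpr hx)
  rw [pos, dif_pos h]
  exact h.choose_spec

theorem pos_mem (hx : x ∈ Finset.Icc 1 (numCells lam mu)) : pos T x ∈ skewCells lam mu :=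
  (pos_mem_and_entry_pos hx).1

theorem entry_pos (hx : x ∈ Finset.Icc 1 (numCells lam mu)) : T.entry (pos T x) = x :=
  (pos_mem_and_entry_pos hx).2

theorem pos_eq_of_entry_eq (hc : c ∈ skewCells lam mu) (he : T.entry c = x) : pos T x = c := by
  have hx : x ∈ Finset.Icc 1 (numCells lam mu) := he ▸ T.entry_mem hc
  exact T.bijOn.injOn (pos_mem hx) hc (by rw [entry_pos hx, he])

theorem pos_injOn (hx : x ∈ Finset.Icc 1 (numCells lam mu))
    (hy : y ∈ Finset.Icc 1 (numCells lam mu)) (h : pos T x = pos T y) : x = y := by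
  rw [← entry_pos (T := T) hx, ← entry_pos (T := T) hy, h]

theorem fst_pos_lt_of_weakSW (hx : x ∈ Finset.Icc 1 (numCells lam mu))
    (hy : y ∈ Finset.Icc 1 (numCells lam mu)) (hxy : x < y) (h : weakSW (pos T y) (pos T x)) :
    (pos T x).1 < (pos T y).1 := by
  refine h.1.lt_of_ne fun heq => ?_
  have := T.strictMonoOn_entry.monotoneOn (pos_mem hy) (pos_mem hx) ⟨heq.symm.le, h.2⟩
  rw [entry_pos hx, entry_pos hy] at this
  omega

theorem fst_pos_lt_iff_not_snd_pos_lt (hx : x ∈ Finset.Icc 1 (numCells lam mu))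
    (hx' : x + 1 ∈ Finset.Icc 1 (numCells lam mu)) :
    (pos T x).1 < (pos T (x + 1)).1 ↔ ¬ (pos T x).2 < (pos T (x + 1)).2 := by
  have ha := pos_mem (T := T) hx
  have hb := pos_mem (T := T) hx'
  have hea := entry_pos (T := T) hx
  have heb := entry_pos (T := T) hx'
  constructor
  · intro h₁ h₂
    -- the corner cell between the two would need an entry strictly between `x` and `x + 1`
    have hc : ((pos T x).1, (pos T (x + 1)).2) ∈ skewCells lam mu :=
      mem_skewCells_of_le_of_le ha hb ⟨le_rfl, h₂.le⟩ ⟨h₁.le, le_rfl⟩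
    have e₁ := T.strictMonoOn_entry ha hc (Prod.lt_iff.mpr (Or.inr ⟨le_rfl, h₂⟩))
    have e₂ := T.strictMonoOn_entry hc hb (Prod.lt_iff.mpr (Or.inl ⟨h₁, le_rfl⟩))
    omega
  · intro h₂
    by_contra h₁
    have := T.strictMonoOn_entry.monotoneOn hb ha ⟨not_lt.mp h₁, not_lt.mp h₂⟩
    omega

theorem mem_Des_iff {i : ℕ} (hi : 1 ≤ i) (hin : i + 1 ≤ numCells lam mu) :
    i ∈ Des T ↔ (pos T i).1 < (pos T (i + 1)).1 := by
  rw [Des, Finset.mem_filter, Finset.mem_Icc]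
  exact ⟨And.right, fun h => ⟨⟨hi, by omega⟩, h⟩⟩

end Tableaux

section Boundary

theorem weakSW_or_weakSW_of_mem_SEboundary {a b : Cell} (ha : a ∈ SEboundary lam mu)
    (hb : b ∈ SEboundary lam mu) : weakSW a b ∨ weakSW b a := by
  rw [SEboundary, Finset.mem_filter] at ha hb
  -- if `q` lay strictly southeast of `p`, the diagonal neighbour of `p` would lie between
  -- them, hence in the shape
  have hSE : ∀ p q : Cell, p ∈ skewCells lam mu → q ∈ skewCells lam mu →
      (p.1 + 1, p.2 + 1) ∉ skewCells lam mu → ¬ (p.1 < q.1 ∧ p.2 < q.2) :=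
    fun p q hp hq hp' h =>
      hp' (mem_skewCells_of_le_of_le hp hq ⟨by simp, by simp⟩ ⟨h.1, h.2⟩)
  have h₁ := hSE a b ha.1 hb.1 ha.2
  have h₂ := hSE b a hb.1 ha.1 hb.2
  unfold weakSW
  omega

theorem isChain_SEboundary : IsChain weakSW (SEboundary lam mu : Set Cell) :=
  fun _ ha _ hb _ => weakSW_or_weakSW_of_mem_SEboundary ha hb

end Boundary

section Components

variable {P : Finset Cell} {a b c : Cell}

theorem sameComp_symm (h : sameComp P a b) : sameComp P b a := by
  obtain ⟨ha, hb, hpath⟩ := h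
  refine ⟨hb, ha, ?_⟩
  induction hpath with
  | refl => exact .refl
  | tail _ hstep ih =>
    obtain ⟨hx, hy, hadj⟩ := hstep
    exact .head ⟨hy, hx, by unfold adjacent at hadj ⊢; omega⟩ (ih hx)

theorem sameComp_trans (hab : sameComp P a b) (hbc : sameComp P b c) : sameComp P a c :=
  ⟨hab.1, hbc.2.1, hab.2.2.trans hbc.2.2⟩

theorem sameComp_of_fst_eq_of_snd_le {r c₁ c₂ : ℕ} (h₁ : (r, c₁) ∈ skewCells lam mu)
    (h₂ : (r, c₂) ∈ skewCells lam mu) (h : c₁ ≤ c₂) :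
    sameComp (skewCells lam mu) (r, c₁) (r, c₂) := by
  induction c₂, h using Nat.le_induction with
  | base => exact ⟨h₁, h₁, .refl⟩
  | succ c hc ih =>
    have hmid : (r, c) ∈ skewCells lam mu :=
      mem_skewCells_of_le_of_le h₁ h₂ ⟨le_rfl, hc⟩ ⟨le_rfl, by omega⟩
    have hstep : adjacent (r, c) (r, c + 1) := Or.inl ⟨rfl, Or.inr rfl⟩
    exact sameComp_trans (ih hmid) ⟨hmid, h₂, .single ⟨hmid, h₂, hstep⟩⟩

theorem sameComp_of_fst_eq (ha : a ∈ skewCells lam mu) (hb : b ∈ skewCells lam mu)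
    (hab : a.1 = b.1) : sameComp (skewCells lam mu) a b := by
  obtain ⟨a₁, a₂⟩ := a
  obtain ⟨b₁, b₂⟩ := b
  obtain rfl : a₁ = b₁ := hab
  rcases le_total a₂ b₂ with h | h
  · exact sameComp_of_fst_eq_of_snd_le ha hb h
  · exact sameComp_symm (sameComp_of_fst_eq_of_snd_le hb ha h)

/-- A path between two cells crosses every row in between, and rows of a skew shape are
connected. -/
theorem sameComp_of_fst_le_of_le (hab : sameComp (skewCells lam mu) a b)
    (hc : c ∈ skewCells lam mu) (h₁ : b.1 ≤ c.1) (h₂ : c.1 ≤ a.1) :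
    sameComp (skewCells lam mu) c b := by
  obtain ⟨ha, hb, hpath⟩ := hab
  induction hpath using Relation.ReflTransGen.head_induction_on with
  | refl => exact sameComp_of_fst_eq hc hb (by omega)
  | @head a a' hstep hrest ih =>
    rcases le_or_gt c.1 a'.1 with h | h
    · exact ih h hstep.2.1
    · have hrow : c.1 = a.1 := by have hadj := hstep.2.2; unfold adjacent at hadj; omega
      exact sameComp_trans (sameComp_of_fst_eq hc ha hrow) ⟨ha, hb, .head hstep hrest⟩

end Components

section MinUnimodal

theorem min'_Icc {a b : ℕ} (hne : (Finset.Icc a b).Nonempty) : (Finset.Icc a b).min' hne = a :=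
  le_antisymm (Finset.min'_le _ a (Finset.left_mem_Icc.mpr (Finset.nonempty_Icc.mp hne)))
    (Finset.le_min' _ _ _ fun _ hy => (Finset.mem_Icc.mp hy).1)

namespace MinUnimodalSE

variable {T : SYT lam mu} {S : Finset ℕ} {x y z a b : ℕ}

theorem mem_Icc (hS : MinUnimodalSE T S) (hx : x ∈ S) : x ∈ Finset.Icc 1 (numCells lam mu) :=
  hS.2.1 hx

theorem mem_SEboundary (hS : MinUnimodalSE T S) (hx : x ∈ S) : pos T x ∈ SEboundary lam mu :=
  hS.2.2.1 x hx

theorem sameComp (hS : MinUnimodalSE T S) (hx : x ∈ S) (hy : y ∈ S) :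
    SkewSE.sameComp (skewCells lam mu) (pos T x) (pos T y) :=
  hS.2.2.2.1 x hx y hy

theorem weakSW_or_weakSW (hS : MinUnimodalSE T S) (hx : x ∈ S) (hy : y ∈ S) :
    weakSW (pos T x) (pos T y) ∨ weakSW (pos T y) (pos T x) :=
  hS.2.2.2.2.1 x hx y hy

theorem left_mem (hS : MinUnimodalSE T (Finset.Icc a b)) : a ∈ Finset.Icc a b :=
  Finset.left_mem_Icc.mpr (Finset.nonempty_Icc.mp hS.1)

theorem lt_of_swLT_of_weakSW_min (hS : MinUnimodalSE T (Finset.Icc a b))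
    (hx : x ∈ Finset.Icc a b) (hy : y ∈ Finset.Icc a b) (hxy : swLT (pos T x) (pos T y))
    (hya : weakSW (pos T y) (pos T a)) : y < x := by
  obtain ⟨hne, -, -, -, -, hord⟩ := hS
  exact (hord x hx y hy hxy).1 (by rwa [min'_Icc])

theorem lt_of_swLT_of_min_weakSW (hS : MinUnimodalSE T (Finset.Icc a b))
    (hx : x ∈ Finset.Icc a b) (hy : y ∈ Finset.Icc a b) (hxy : swLT (pos T x) (pos T y))
    (hax : weakSW (pos T a) (pos T x)) : x < y := by
  obtain ⟨hne, -, -, -, -, hord⟩ := hS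
  exact (hord x hx y hy hxy).2 (by rwa [min'_Icc])

theorem lt_or_lt_of_swLT (hS : MinUnimodalSE T S) (hx : x ∈ S) (hy : y ∈ S) (hz : z ∈ S)
    (hxy : swLT (pos T x) (pos T y)) (hyz : swLT (pos T y) (pos T z)) : y < x ∨ y < z := by
  obtain ⟨hne, -, -, -, hcmp, hord⟩ := hS
  rcases hcmp y hy _ (S.min'_mem hne) with h | h
  · exact Or.inl ((hord x hx y hy hxy).1 h)
  · exact Or.inr ((hord y hy z hz hyz).2 h)

/-- Otherwise the diagonal neighbour of the cell of `m - 1` would be an interior maximum. -/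
theorem pos_pred_mem_SEboundary {m : ℕ} (hS : MinUnimodalSE T (Finset.Icc m (numCells lam mu)))
    (hm : 2 ≤ m) : pos T (m - 1) ∈ SEboundary lam mu := by
  have hmS := hS.mem_Icc hS.left_mem
  have hQ : m - 1 ∈ Finset.Icc 1 (numCells lam mu) := by
    simp only [Finset.mem_Icc] at hmS ⊢; omega
  have hQs := pos_mem (T := T) hQ
  refine Finset.mem_filter.mpr ⟨hQs, fun hd => ?_⟩
  set Q := pos T (m - 1)
  have hlarge : ∀ c ∈ skewCells lam mu, Q < c →
      T.entry c ∈ Finset.Icc m (numCells lam mu) ∧ pos T (T.entry c) = c := by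
    intro c hc hQc
    have hlt := T.strictMonoOn_entry hQs hc hQc
    have hc' := T.entry_mem hc
    rw [entry_pos hQ] at hlt
    simp only [Finset.mem_Icc] at hc' ⊢
    exact ⟨by omega, pos_eq_of_entry_eq hc rfl⟩
  have hs : (Q.1 + 1, Q.2) ∈ skewCells lam mu :=
    mem_skewCells_of_le_of_le hQs hd ⟨by simp, le_rfl⟩ ⟨le_rfl, by simp⟩
  have he : (Q.1, Q.2 + 1) ∈ skewCells lam mu :=
    mem_skewCells_of_le_of_le hQs hd ⟨le_rfl, by simp⟩ ⟨by simp, le_rfl⟩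
  obtain ⟨hsS, hspos⟩ := hlarge _ hs (Prod.lt_iff.mpr (Or.inl ⟨by simp, le_rfl⟩))
  obtain ⟨heS, hepos⟩ := hlarge _ he (Prod.lt_iff.mpr (Or.inr ⟨le_rfl, by simp⟩))
  obtain ⟨hdS, hdpos⟩ := hlarge _ hd (Prod.lt_iff.mpr (Or.inl ⟨by simp, by simp⟩))
  have hmax := hS.lt_or_lt_of_swLT hsS hdS heS
    (by rw [hspos, hdpos]; exact ⟨⟨le_rfl, by simp⟩, by simp⟩)
    (by rw [hdpos, hepos]; exact ⟨⟨by simp, le_rfl⟩, by simp⟩)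
  have h₁ := T.strictMonoOn_entry hs hd (Prod.lt_iff.mpr (Or.inr ⟨le_rfl, by simp⟩))
  have h₂ := T.strictMonoOn_entry he hd (Prod.lt_iff.mpr (Or.inl ⟨by simp, le_rfl⟩))
  omega

theorem Icc_pred {m : ℕ} (hS : MinUnimodalSE T (Finset.Icc m b)) (hm : 2 ≤ m)
    (hQ : pos T (m - 1) ∈ SEboundary lam mu) (hQY : swLT (pos T (m - 1)) (pos T m))
    (hconn : SkewSE.sameComp (skewCells lam mu) (pos T (m - 1)) (pos T m))
    (hgap : ∀ x ∈ Finset.Icc m b, weakSW (pos T (m - 1)) (pos T x) →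
      weakSW (pos T m) (pos T x)) :
    MinUnimodalSE T (Finset.Icc (m - 1) b) := by
  have hmS := hS.left_mem
  have hcases : ∀ x ∈ Finset.Icc (m - 1) b, x = m - 1 ∨ x ∈ Finset.Icc m b := by
    intro x hx
    simp only [Finset.mem_Icc] at hx ⊢
    omega
  have hbdy : ∀ x ∈ Finset.Icc (m - 1) b, pos T x ∈ SEboundary lam mu := by
    intro x hx
    rcases hcases x hx with rfl | hx
    exacts [hQ, hS.mem_SEboundary hx]
  have hconnY : ∀ x ∈ Finset.Icc (m - 1) b,
      SkewSE.sameComp (skewCells lam mu) (pos T x) (pos T m) := by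
    intro x hx
    rcases hcases x hx with rfl | hx
    exacts [hconn, hS.sameComp hx hmS]
  have hbn := hS.mem_Icc (Finset.right_mem_Icc.mpr (Finset.mem_Icc.mp hmS).2)
  refine ⟨Finset.nonempty_Icc.mpr (by simp only [Finset.mem_Icc] at hmS; omega), ?_, hbdy,
    fun x hx y hy => sameComp_trans (hconnY x hx) (sameComp_symm (hconnY y hy)),
    fun x hx y hy => weakSW_or_weakSW_of_mem_SEboundary (hbdy x hx) (hbdy y hy), ?_⟩
  · intro x hx
    simp only [Finset.mem_Icc] at hx hbn ⊢
    omega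
  · intro x hx y hy hxy
    rw [min'_Icc]
    have hne : x ≠ y := fun h => hxy.2 (h ▸ rfl)
    rcases hcases x hx with rfl | hx' <;> rcases hcases y hy with rfl | hy'
    · exact absurd rfl hne
    · exact ⟨fun h => absurd h (not_weakSW_of_swLT hxy),
        fun _ => by simp only [Finset.mem_Icc] at hy'; omega⟩
    · exact ⟨fun _ => by simp only [Finset.mem_Icc] at hx'; omega,
        fun h => absurd h (not_weakSW_of_swLT hxy)⟩
    · exact ⟨fun h => hS.lt_of_swLT_of_weakSW_min hx' hy' hxy (weakSW_trans h hQY.1),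
        fun h => hS.lt_of_swLT_of_min_weakSW hx' hy' hxy (hgap x hx' h)⟩

end MinUnimodalSE

end MinUnimodal

section Rotation

/-- The southwest case of the rotation, abstracted: `C` is an initial segment (in
southwest-to-northeast order) of the cells of the maximal min-unimodal segment `{m, …, n}`
of `U`, its cells weakly northeast of `pos_U(m)` stay in the row of `pos_U(m)`, and `V`
moves every entry `x < n` of `C` to the next cell of `C` southwest of it. -/
structure SWRotation (U V : SYT lam mu) (m : ℕ) (C : Finset Cell) : Prop where
  minUnimodal : MinUnimodalSE U (Finset.Icc m (numCells lam mu))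
  maximal : 2 ≤ m → ¬ MinUnimodalSE U (Finset.Icc (m - 1) (numCells lam mu))
  subset : C ⊆ (Finset.Icc m (numCells lam mu)).image (pos U)
  weakSW_of_not_mem : ∀ c ∈ (Finset.Icc m (numCells lam mu)).image (pos U), c ∉ C →
    ∀ d ∈ C, weakSW d c
  fst_eq_of_weakSW : ∀ c ∈ C, weakSW (pos U m) c → c.1 = (pos U m).1
  pos_moved : ∀ x, 1 ≤ x → x < numCells lam mu → pos U x ∈ C →
    IsNextSW C (pos U x) (pos V x)
  pos_fixed : ∀ x ∈ Finset.Icc 1 (numCells lam mu), pos U x ∉ C → pos V x = pos U x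

namespace SWRotation

variable {U V : SYT lam mu} {m i x : ℕ} {C : Finset Cell}

theorem mem_Icc_of_mem (h : SWRotation U V m C) (hx : x ∈ Finset.Icc 1 (numCells lam mu))
    (hxC : pos U x ∈ C) : x ∈ Finset.Icc m (numCells lam mu) := by
  obtain ⟨w, hw, hwx⟩ := Finset.mem_image.mp (h.subset hxC)
  rwa [pos_injOn (h.minUnimodal.mem_Icc hw) hx hwx] at hw

theorem mem_of_weakSW (h : SWRotation U V m C) {c d : Cell}
    (hc : c ∈ (Finset.Icc m (numCells lam mu)).image (pos U)) (hd : d ∈ C)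
    (hcd : weakSW c d) : c ∈ C := by
  by_contra hcC
  exact hcC (weakSW_antisymm hcd (h.weakSW_of_not_mem c hc hcC d hd) ▸ hd)

/-- On the southwest arm entries decrease towards `m`, so each moved entry goes strictly
south. -/
theorem fst_lt_fst_pos_of_weakSW (h : SWRotation U V m C)
    (hx : x ∈ Finset.Icc m (numCells lam mu)) (hxn : x < numCells lam mu)
    (hxC : pos U x ∈ C) (hxY : weakSW (pos U x) (pos U m)) : (pos U x).1 < (pos V x).1 := by
  have hx₁ := h.minUnimodal.mem_Icc hx
  obtain ⟨hB, hBx, -⟩ := h.pos_moved x (Finset.mem_Icc.mp hx₁).1 hxn hxC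
  obtain ⟨w, hw, hwB⟩ := Finset.mem_image.mp (h.subset hB)
  rw [← hwB] at hBx ⊢
  exact fst_pos_lt_of_weakSW hx₁ (h.minUnimodal.mem_Icc hw)
    (h.minUnimodal.lt_of_swLT_of_weakSW_min hw hx hBx hxY) hBx.1

theorem fst_pos_eq_of_swLT (h : SWRotation U V m C) (hx : 1 ≤ x) (hxn : x < numCells lam mu)
    (hxC : pos U x ∈ C) (hYx : swLT (pos U m) (pos U x)) :
    (pos U x).1 = (pos U m).1 ∧ (pos V x).1 = (pos U m).1 := by
  have hYC : pos U m ∈ C :=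
    h.mem_of_weakSW (Finset.mem_image_of_mem _ h.minUnimodal.left_mem) hxC hYx.1
  obtain ⟨-, hBx, hBmax⟩ := h.pos_moved x hx hxn hxC
  have hx₁ := h.fst_eq_of_weakSW _ hxC hYx.1
  exact ⟨hx₁, le_antisymm (hBmax _ hYC hYx).1 (hx₁ ▸ hBx.1.1)⟩

theorem fst_lt_iff_of_mem_of_mem (h : SWRotation U V m C) (hi : 1 ≤ i)
    (hin : i + 2 ≤ numCells lam mu) (hiC : pos U i ∈ C) (hjC : pos U (i + 1) ∈ C) :
    (pos U i).1 < (pos U (i + 1)).1 ↔ (pos V i).1 < (pos V (i + 1)).1 := by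
  have hi₁ : i ∈ Finset.Icc 1 (numCells lam mu) := Finset.mem_Icc.mpr ⟨hi, by omega⟩
  have hj₁ : i + 1 ∈ Finset.Icc 1 (numCells lam mu) :=
    Finset.mem_Icc.mpr ⟨by omega, by omega⟩
  have hiS := h.mem_Icc_of_mem hi₁ hiC
  have hjS := h.mem_Icc_of_mem hj₁ hjC
  have hmS := h.minUnimodal.left_mem
  have hne : pos U i ≠ pos U (i + 1) := fun he => by have := pos_injOn hi₁ hj₁ he; omega
  obtain ⟨-, -, hBimax⟩ := h.pos_moved i hi (by omega) hiC
  rcases h.minUnimodal.weakSW_or_weakSW hiS hjS with hij | hji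
  · -- the cell of `i + 1` is on the northeast arm, so it and its image stay in the row of `m`
    have hjY : ¬ weakSW (pos U (i + 1)) (pos U m) := fun hjY =>
      absurd (h.minUnimodal.lt_of_swLT_of_weakSW_min hiS hjS ⟨hij, hne⟩ hjY) (by omega)
    obtain ⟨hjrow, hVjrow⟩ := h.fst_pos_eq_of_swLT (by omega) (by omega) hjC
      (swLT_of_not_weakSW (h.minUnimodal.weakSW_or_weakSW hjS hmS) hjY)
    by_cases hiY : weakSW (pos U i) (pos U m)
    · have hVi := h.fst_lt_fst_pos_of_weakSW hiS (by omega) hiC hiY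
      have := hiY.1
      exact iff_of_false (by omega) (by omega)
    · obtain ⟨hirow, hVirow⟩ := h.fst_pos_eq_of_swLT hi (by omega) hiC
        (swLT_of_not_weakSW (h.minUnimodal.weakSW_or_weakSW hiS hmS) hiY)
      rw [hirow, hjrow, hVirow, hVjrow]
  · -- a descent in `U`; the cell of `i + 1` is on the southwest arm
    have hjY : weakSW (pos U (i + 1)) (pos U m) := by
      rcases h.minUnimodal.weakSW_or_weakSW hjS hmS with hjY | hYj
      · exact hjY
      · exact absurd (h.minUnimodal.lt_of_swLT_of_min_weakSW hjS hiS ⟨hji, hne.symm⟩ hYj)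
          (by omega)
    have hVi := (hBimax _ hjC ⟨hji, hne.symm⟩).1
    have hVj := h.fst_lt_fst_pos_of_weakSW hjS (by omega) hjC hjY
    exact iff_of_true (fst_pos_lt_of_weakSW hi₁ hj₁ (lt_add_one i) hji) (by omega)

theorem fst_lt_iff_of_mem_of_not_mem (h : SWRotation U V m C) (hi : 1 ≤ i)
    (hin : i + 2 ≤ numCells lam mu) (hiC : pos U i ∈ C) (hjC : pos U (i + 1) ∉ C) :
    (pos U i).1 < (pos U (i + 1)).1 ↔ (pos V i).1 < (pos V (i + 1)).1 := by
  have hiS := h.mem_Icc_of_mem (Finset.mem_Icc.mpr ⟨hi, by omega⟩) hiC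
  have hjP : pos U (i + 1) ∈ (Finset.Icc m (numCells lam mu)).image (pos U) :=
    Finset.mem_image_of_mem _ (by simp only [Finset.mem_Icc] at hiS ⊢; omega)
  obtain ⟨hBC, -, -⟩ := h.pos_moved i hi (by omega) hiC
  have h₁ := (h.weakSW_of_not_mem _ hjP hjC _ hiC).1
  have h₂ := (h.weakSW_of_not_mem _ hjP hjC _ hBC).1
  rw [h.pos_fixed (i + 1) (Finset.mem_Icc.mpr ⟨by omega, by omega⟩) hjC]
  exact iff_of_false (by omega) (by omega)

/-- Otherwise the cell of `m - 1` could be adjoined to the min-unimodal segment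
`{m, …, n}`, against maximality. -/
theorem fst_pos_pred_lt (h : SWRotation U V m C) (hm : 2 ≤ m) (hmn : m < numCells lam mu)
    (hmC : pos U m ∈ C) (hlt : (pos U (m - 1)).1 < (pos V m).1) :
    (pos U (m - 1)).1 < (pos U m).1 := by
  by_contra! hle
  have hS := h.minUnimodal
  have hmS := hS.left_mem
  have hm₁ := hS.mem_Icc hmS
  have hQ₁ : m - 1 ∈ Finset.Icc 1 (numCells lam mu) := by
    simp only [Finset.mem_Icc] at hm₁ ⊢; omega
  have hQ := hS.pos_pred_mem_SEboundary hm
  obtain ⟨hBC, -, hBmax⟩ := h.pos_moved m (by omega) hmn hmC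
  have hQY : swLT (pos U (m - 1)) (pos U m) :=
    swLT_of_not_weakSW (weakSW_or_weakSW_of_mem_SEboundary (hS.mem_SEboundary hmS) hQ)
      fun hYQ => absurd (fst_pos_lt_of_weakSW hQ₁ hm₁ (by omega) hYQ) (by omega)
  obtain ⟨w, hw, hwB⟩ := Finset.mem_image.mp (h.subset hBC)
  have hconn := sameComp_of_fst_le_of_le (hS.sameComp hw hmS) (pos_mem hQ₁) hle
    (by rw [hwB]; exact hlt.le)
  have hgap : ∀ x ∈ Finset.Icc m (numCells lam mu), weakSW (pos U (m - 1)) (pos U x) →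
      weakSW (pos U m) (pos U x) := by
    intro x hx hQx
    by_contra hYx
    have hxY := swLT_of_not_weakSW (hS.weakSW_or_weakSW hmS hx) hYx
    have hxC := h.mem_of_weakSW (Finset.mem_image_of_mem _ hx) hmC hxY.1
    have := (hBmax _ hxC hxY).1
    have := hQx.1
    omega
  exact h.maximal hm (hS.Icc_pred hm hQ hQY hconn hgap)

theorem fst_lt_iff_of_not_mem_of_mem (h : SWRotation U V m C) (hi : 1 ≤ i)
    (hin : i + 2 ≤ numCells lam mu) (hiC : pos U i ∉ C) (hjC : pos U (i + 1) ∈ C) :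
    (pos U i).1 < (pos U (i + 1)).1 ↔ (pos V i).1 < (pos V (i + 1)).1 := by
  have hi₁ : i ∈ Finset.Icc 1 (numCells lam mu) := Finset.mem_Icc.mpr ⟨hi, by omega⟩
  have hj₁ : i + 1 ∈ Finset.Icc 1 (numCells lam mu) :=
    Finset.mem_Icc.mpr ⟨by omega, by omega⟩
  have hjS := h.mem_Icc_of_mem hj₁ hjC
  obtain ⟨-, hBj, -⟩ := h.pos_moved (i + 1) (by omega) (by omega) hjC
  rw [h.pos_fixed i hi₁ hiC]
  by_cases hiS : i ∈ Finset.Icc m (numCells lam mu)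
  · have hji := h.weakSW_of_not_mem _ (Finset.mem_image_of_mem _ hiS) hiC _ hjC
    have hT := fst_pos_lt_of_weakSW hi₁ hj₁ (lt_add_one i) hji
    exact iff_of_true hT (hT.trans_le hBj.1.1)
  · obtain rfl : m = i + 1 := by simp only [Finset.mem_Icc] at hiS hjS; omega
    have hY := h.fst_lt_fst_pos_of_weakSW hjS (by omega) hjC (weakSW_refl _)
    exact ⟨fun hT => hT.trans hY, h.fst_pos_pred_lt (by omega) (by omega) hjC⟩

theorem fst_lt_iff (h : SWRotation U V m C) (hi : 1 ≤ i) (hin : i + 2 ≤ numCells lam mu) :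
    (pos U i).1 < (pos U (i + 1)).1 ↔ (pos V i).1 < (pos V (i + 1)).1 := by
  by_cases hiC : pos U i ∈ C <;> by_cases hjC : pos U (i + 1) ∈ C
  · exact h.fst_lt_iff_of_mem_of_mem hi hin hiC hjC
  · exact h.fst_lt_iff_of_mem_of_not_mem hi hin hiC hjC
  · exact h.fst_lt_iff_of_not_mem_of_mem hi hin hiC hjC
  · rw [h.pos_fixed i (Finset.mem_Icc.mpr ⟨hi, by omega⟩) hiC,
      h.pos_fixed (i + 1) (Finset.mem_Icc.mpr ⟨by omega, by omega⟩) hjC]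

end SWRotation

end Rotation

section Transpose

theorem mem_skewCells_transpose {c : Cell} :
    c ∈ skewCells lam.transpose mu.transpose ↔ c.swap ∈ skewCells lam mu := by
  simp [skewCells, YoungDiagram.mem_cells, YoungDiagram.mem_transpose]

theorem skewCells_transpose :
    skewCells lam.transpose mu.transpose = (skewCells lam mu).image Prod.swap := by
  ext c
  rw [mem_skewCells_transpose, ← Prod.swap_injective.mem_finset_image, Prod.swap_swap]

theorem numCells_transpose : numCells lam.transpose mu.transpose = numCells lam mu := by
  rw [numCells, numCells, skewCells_transpose,
    Finset.card_image_of_injective _ Prod.swap_injective]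

theorem mem_SEboundary_transpose {c : Cell} :
    c ∈ SEboundary lam.transpose mu.transpose ↔ c.swap ∈ SEboundary lam mu := by
  simp only [SEboundary, Finset.mem_filter, mem_skewCells_transpose, Prod.fst_swap,
    Prod.snd_swap, Prod.swap_prod_mk]

theorem sameComp_image_swap {P : Finset Cell} {a b : Cell} (h : sameComp P a b) :
    sameComp (P.image Prod.swap) a.swap b.swap := by
  obtain ⟨ha, hb, hpath⟩ := h
  refine ⟨Finset.mem_image_of_mem _ ha, Finset.mem_image_of_mem _ hb,
    Relation.ReflTransGen.lift Prod.swap (fun x y ⟨hx, hy, hadj⟩ => ?_) _ _ hpath⟩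
  refine ⟨Finset.mem_image_of_mem _ hx, Finset.mem_image_of_mem _ hy, ?_⟩
  unfold adjacent at hadj ⊢
  simp only [Prod.fst_swap, Prod.snd_swap]
  tauto

theorem sameComp_transpose_iff {a b : Cell} :
    sameComp (skewCells lam.transpose mu.transpose) a.swap b.swap ↔
      sameComp (skewCells lam mu) a b := by
  refine ⟨fun h => ?_, fun h => skewCells_transpose (lam := lam) ▸ sameComp_image_swap h⟩
  have h' := sameComp_image_swap h
  rwa [skewCells_transpose, Finset.image_image, Prod.swap_swap_eq, Finset.image_id,
    Prod.swap_swap, Prod.swap_swap] at h'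

def SYT.transpose (T : SYT lam mu) : SYT lam.transpose mu.transpose where
  entry c := T.entry c.swap
  bijOn := by
    rw [numCells_transpose]
    refine T.bijOn.comp ⟨fun c hc => mem_skewCells_transpose.mp hc,
      fun a _ b _ h => Prod.swap_injective h, fun c hc => ⟨c.swap, ?_, Prod.swap_swap c⟩⟩
    exact mem_skewCells_transpose.mpr (by rwa [Prod.swap_swap])
  row_lt i j h₁ h₂ :=
    T.col_lt j i (mem_skewCells_transpose.mp h₁) (mem_skewCells_transpose.mp h₂)
  col_lt i j h₁ h₂ :=
    T.row_lt j i (mem_skewCells_transpose.mp h₁) (mem_skewCells_transpose.mp h₂)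
  zero_outside c hc := T.zero_outside c.swap (fun h => hc (mem_skewCells_transpose.mpr h))

variable {T : SYT lam mu} {x : ℕ}

theorem pos_transpose (hx : x ∈ Finset.Icc 1 (numCells lam mu)) :
    pos T.transpose x = (pos T x).swap := by
  refine pos_eq_of_entry_eq (mem_skewCells_transpose.mpr ?_) ?_
  · rw [Prod.swap_swap]
    exact pos_mem hx
  · show T.entry (pos T x).swap.swap = x
    rw [Prod.swap_swap, entry_pos hx]

theorem minUnimodalSE_transpose_iff {S : Finset ℕ} :
    MinUnimodalSE T.transpose S ↔ MinUnimodalSE T S := by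
  unfold MinUnimodalSE
  rw [numCells_transpose]
  refine exists_congr fun hne => and_congr_right fun hS => ?_
  have hpos : ∀ x ∈ S, pos T.transpose x = (pos T x).swap := fun x hx => pos_transpose (hS hx)
  have hmin := hpos _ (S.min'_mem hne)
  refine and_congr ?_ (and_congr ?_ (and_congr ?_ ?_))
  · exact forall₂_congr fun x hx => by rw [hpos x hx, mem_SEboundary_transpose, Prod.swap_swap]
  · exact forall₂_congr fun x hx => forall₂_congr fun y hy => by
      rw [hpos x hx, hpos y hy, sameComp_transpose_iff]
  · exact forall₂_congr fun x hx => forall₂_congr fun y hy => by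
      rw [hpos x hx, hpos y hy, weakSW_swap_swap, weakSW_swap_swap, or_comm]
  · -- transposition reverses the southwest-to-northeast order
    rw [forall₂_comm]
    exact forall₂_congr fun y hy => forall₂_congr fun x hx => by
      rw [hpos x hx, hpos y hy, hmin, swLT_swap_swap, weakSW_swap_swap, weakSW_swap_swap,
        and_comm]

theorem fst_pos_transpose_lt_iff (hx : x ∈ Finset.Icc 1 (numCells lam mu))
    (hx' : x + 1 ∈ Finset.Icc 1 (numCells lam mu)) :
    (pos T.transpose x).1 < (pos T.transpose (x + 1)).1 ↔ ¬ (pos T x).1 < (pos T (x + 1)).1 := by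
  rw [pos_transpose hx, pos_transpose hx', Prod.fst_swap, Prod.fst_swap,
    fst_pos_lt_iff_not_snd_pos_lt hx hx', not_not]

end Transpose

section RotSE

variable {T R : SYT lam mu} {x : ℕ}

theorem minUnimodalSE_singleton (T : SYT lam mu) (hn : 1 ≤ numCells lam mu) :
    MinUnimodalSE T (Finset.Icc (numCells lam mu) (numCells lam mu)) := by
  have hn₁ : numCells lam mu ∈ Finset.Icc 1 (numCells lam mu) := by simp [hn]
  have hbdy : pos T (numCells lam mu) ∈ SEboundary lam mu := by
    refine Finset.mem_filter.mpr ⟨pos_mem hn₁, fun hd => ?_⟩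
    have hlt := T.strictMonoOn_entry (pos_mem (T := T) hn₁) hd
      (Prod.lt_iff.mpr (Or.inl ⟨by simp, by simp⟩))
    have hle := T.entry_mem hd
    rw [entry_pos hn₁] at hlt
    simp only [Finset.mem_Icc] at hle
    omega
  rw [Finset.Icc_self]
  refine ⟨Finset.singleton_nonempty _, by simpa using hn₁, ?_, ?_, ?_, ?_⟩ <;>
    simp only [Finset.mem_singleton, forall_eq]
  · exact hbdy
  · exact ⟨pos_mem hn₁, pos_mem hn₁, .refl⟩
  · exact Or.inl (weakSW_refl _)
  · exact fun h => absurd rfl h.2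

theorem minUnimodalSE_RcSE (T : SYT lam mu) (hn : 1 ≤ numCells lam mu) :
    MinUnimodalSE T (RcSE T) := by
  have hone : 1 ∈ {k | 1 ≤ k ∧ k ≤ numCells lam mu ∧
      MinUnimodalSE T (Finset.Icc (numCells lam mu - k + 1) (numCells lam mu))} :=
    ⟨le_rfl, hn, by rw [Nat.sub_add_cancel hn]; exact minUnimodalSE_singleton T hn⟩
  exact (Nat.sSup_mem ⟨1, hone⟩ ⟨numCells lam mu, fun k hk => hk.2.1⟩).2.2

theorem not_minUnimodalSE_Icc_pred_RcSE (hm : 2 ≤ numCells lam mu - kSE T + 1) :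
    ¬ MinUnimodalSE T (Finset.Icc (numCells lam mu - kSE T + 1 - 1) (numCells lam mu)) := by
  intro hmu
  have hle : kSE T + 1 ≤ kSE T := le_csSup ⟨numCells lam mu, fun k hk => hk.2.1⟩
    ⟨by omega, by omega, by rwa [show numCells lam mu - (kSE T + 1) + 1 =
      numCells lam mu - kSE T + 1 - 1 by omega]⟩
  omega

theorem RpSE_subset_SEboundary (hn : 1 ≤ numCells lam mu) : RpSE T ⊆ SEboundary lam mu := by
  intro c hc
  obtain ⟨x, hx, rfl⟩ := Finset.mem_image.mp hc
  exact (minUnimodalSE_RcSE T hn).mem_SEboundary hx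

theorem isChain_chainSE (hn : 1 ≤ numCells lam mu) : IsChain weakSW (chainSE T : Set Cell) :=
  isChain_SEboundary.mono
    (Finset.coe_subset.mpr ((Finset.filter_subset _ _).trans (RpSE_subset_SEboundary hn)))

theorem mem_RpSE_posN (hn : 1 ≤ numCells lam mu) : posN T ∈ RpSE T :=
  Finset.mem_image_of_mem _
    (Finset.right_mem_Icc.mpr (Finset.nonempty_Icc.mp (minUnimodalSE_RcSE T hn).1))

theorem mem_RpSE_Ycell (hn : 1 ≤ numCells lam mu) : Ycell T ∈ RpSE T :=
  Finset.mem_image_of_mem _ (minUnimodalSE_RcSE T hn).left_mem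

/-- `n` cannot be an interior maximum of the min-unimodal `Rc_SE(T)`. -/
theorem SWmostAtN_or_NEmostAtN (T : SYT lam mu) (hn : 1 ≤ numCells lam mu) :
    SWmostAtN T ∨ NEmostAtN T := by
  have hS := minUnimodalSE_RcSE T hn
  have hnS : numCells lam mu ∈ RcSE T := Finset.right_mem_Icc.mpr (Finset.nonempty_Icc.mp hS.1)
  by_contra hboth
  simp only [SWmostAtN, NEmostAtN, not_or, not_forall] at hboth
  obtain ⟨⟨c, hc, hnc⟩, ⟨d, hd, hdn⟩⟩ := hboth
  obtain ⟨x, hx, rfl⟩ := Finset.mem_image.mp hc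
  obtain ⟨y, hy, rfl⟩ := Finset.mem_image.mp hd
  have := hS.lt_or_lt_of_swLT hx hnS hy (swLT_of_not_weakSW (hS.weakSW_or_weakSW hnS hx) hnc)
    (swLT_of_not_weakSW (hS.weakSW_or_weakSW hy hnS) hdn)
  have := hS.mem_Icc hx
  have := hS.mem_Icc hy
  simp only [Finset.mem_Icc] at *
  omega

theorem southEnd_spec {P : Finset Cell} {Y : Cell} (hY : Y ∈ P) :
    southEnd P Y ∈ P ∧ (southEnd P Y).2 = Y.2 ∧
      ∀ d ∈ P, d.2 = Y.2 → d.1 ≤ (southEnd P Y).1 := by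
  have h : ∃ c ∈ P, c.2 = Y.2 ∧ ∀ d ∈ P, d.2 = Y.2 → d.1 ≤ c.1 := by
    obtain ⟨c, hc, hmax⟩ := (P.filter (·.2 = Y.2)).exists_max_image (·.1)
      ⟨Y, Finset.mem_filter.mpr ⟨hY, rfl⟩⟩
    rw [Finset.mem_filter] at hc
    exact ⟨c, hc.1, hc.2, fun d hd hdY => hmax d (Finset.mem_filter.mpr ⟨hd, hdY⟩)⟩
  rw [southEnd, dif_pos h]
  exact h.choose_spec

theorem eastEnd_spec {P : Finset Cell} {Y : Cell} (hY : Y ∈ P) :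
    eastEnd P Y ∈ P ∧ (eastEnd P Y).1 = Y.1 ∧
      ∀ d ∈ P, d.1 = Y.1 → d.2 ≤ (eastEnd P Y).2 := by
  have h : ∃ c ∈ P, c.1 = Y.1 ∧ ∀ d ∈ P, d.1 = Y.1 → d.2 ≤ c.2 := by
    obtain ⟨c, hc, hmax⟩ := (P.filter (·.1 = Y.1)).exists_max_image (·.2)
      ⟨Y, Finset.mem_filter.mpr ⟨hY, rfl⟩⟩
    rw [Finset.mem_filter] at hc
    exact ⟨c, hc.1, hc.2, fun d hd hdY => hmax d (Finset.mem_filter.mpr ⟨hd, hdY⟩)⟩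
  rw [eastEnd, dif_pos h]
  exact h.choose_spec

theorem Xend_spec_of_SWmostAtN (hSW : SWmostAtN T) (hY : Ycell T ∈ RpSE T) :
    Xend T ∈ RpSE T ∧
      ∀ c ∈ RpSE T, weakSW c (Xend T) → weakSW (Ycell T) c → c.1 = (Ycell T).1 := by
  rw [Xend, if_pos hSW]
  split_ifs with hsouth
  · obtain ⟨hX, -, hXmax⟩ := southEnd_spec hY
    obtain ⟨c₀, hc₀, hc₀Y, hYc₀⟩ := hsouth
    refine ⟨hX, fun c _ hcX hYc => ?_⟩
    have := hXmax c₀ hc₀ hc₀Y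
    have := hcX.1
    have := hYc.1
    omega
  · obtain ⟨hX, hXY, -⟩ := eastEnd_spec hY
    exact ⟨hX, fun c _ hcX hYc => le_antisymm hYc.1 (hXY ▸ hcX.1)⟩

theorem Xend_spec_of_not_SWmostAtN (hSW : ¬ SWmostAtN T) (hY : Ycell T ∈ RpSE T) :
    Xend T ∈ RpSE T ∧
      ∀ c ∈ RpSE T, weakSW (Xend T) c → weakSW c (Ycell T) → c.2 = (Ycell T).2 := by
  rw [Xend, if_neg hSW]
  split_ifs with heast
  · obtain ⟨hX, -, hXmax⟩ := eastEnd_spec hY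
    obtain ⟨c₀, hc₀, hc₀Y, hYc₀⟩ := heast
    refine ⟨hX, fun c _ hXc hcY => ?_⟩
    have := hXmax c₀ hc₀ hc₀Y
    have := hXc.2
    have := hcY.2
    omega
  · obtain ⟨hX, hXY, -⟩ := southEnd_spec hY
    exact ⟨hX, fun c _ hXc hcY => le_antisymm hcY.2 (hXY ▸ hXc.2)⟩

theorem chainSE_eq_of_SWmostAtN (hSW : SWmostAtN T) (hX : Xend T ∈ RpSE T) :
    chainSE T = (RpSE T).filter (weakSW · (Xend T)) := by
  ext c
  simp only [chainSE, Finset.mem_filter]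
  refine and_congr_right fun hc => ⟨?_, fun hcX => Or.inl ⟨hSW c hc, hcX⟩⟩
  rintro (⟨-, hcX⟩ | ⟨-, hcN⟩)
  · exact hcX
  · rw [weakSW_antisymm hcN (hSW c hc)]
    exact hSW _ hX

theorem chainSE_eq_of_NEmostAtN (hNE : NEmostAtN T) (hX : Xend T ∈ RpSE T) :
    chainSE T = (RpSE T).filter (weakSW (Xend T) ·) := by
  ext c
  simp only [chainSE, Finset.mem_filter]
  refine and_congr_right fun hc => ⟨?_, fun hXc => Or.inr ⟨hXc, hNE c hc⟩⟩
  rintro (⟨hNc, -⟩ | ⟨hXc, -⟩)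
  · rw [weakSW_antisymm (hNE c hc) hNc]
    exact hNE _ hX
  · exact hXc

theorem pos_rotSE_of_not_mem (hR : R.entry = rotEntry T) (hx : x ∈ Finset.Icc 1 (numCells lam mu))
    (hxC : pos T x ∉ chainSE T) : pos R x = pos T x :=
  pos_eq_of_entry_eq (pos_mem hx) (by rw [hR, rotEntry, if_neg hxC, entry_pos hx])

theorem isNextSW_pos_rotSE (hR : R.entry = rotEntry T) (hn : 1 ≤ numCells lam mu)
    (hSW : SWmostAtN T) (hC : chainSE T = (RpSE T).filter (weakSW · (Xend T)))
    (hx : 1 ≤ x) (hxn : x < numCells lam mu) (hxC : pos T x ∈ chainSE T) :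
    IsNextSW (chainSE T) (pos T x) (pos R x) := by
  have hx₁ : x ∈ Finset.Icc 1 (numCells lam mu) := Finset.mem_Icc.mpr ⟨hx, hxn.le⟩
  have hn₁ : numCells lam mu ∈ Finset.Icc 1 (numCells lam mu) :=
    Finset.mem_Icc.mpr ⟨hn, le_rfl⟩
  have hxX := (Finset.mem_filter.mp (hC ▸ hxC)).2
  have hNC : posN T ∈ chainSE T := by
    rw [hC]
    exact Finset.mem_filter.mpr ⟨mem_RpSE_posN hn, weakSW_trans (hSW _ (Finset.filter_subset _ _
      (hC ▸ hxC))) hxX⟩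
  have hnext := isNextSW_nextSW (isChain_chainSE hn) ⟨posN T, hNC,
    hSW _ (Finset.filter_subset _ _ hxC), fun h => by have := pos_injOn hn₁ hx₁ h; omega⟩
  have hBX : nextSW (chainSE T) (pos T x) ≠ Xend T := fun h =>
    not_weakSW_of_swLT hnext.2.1 (h ▸ hxX)
  have hRB : R.entry (nextSW (chainSE T) (pos T x)) = x := by
    rw [hR, rotEntry, if_pos hnext.1, if_neg hBX, if_pos hSW,
      (hnext.isNextNE (isChain_chainSE hn) hxC).nextNE_eq, entry_pos hx₁]
  rwa [pos_eq_of_entry_eq (Finset.filter_subset _ _ (RpSE_subset_SEboundary hn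
    (Finset.filter_subset _ _ hnext.1))) hRB]

end RotSE

section RotSE

variable {T R : SYT lam mu} {x : ℕ}

theorem isNextNE_pos_rotSE (hR : R.entry = rotEntry T) (hn : 1 ≤ numCells lam mu)
    (hSW : ¬ SWmostAtN T) (hNE : NEmostAtN T)
    (hC : chainSE T = (RpSE T).filter (weakSW (Xend T) ·))
    (hx : 1 ≤ x) (hxn : x < numCells lam mu) (hxC : pos T x ∈ chainSE T) :
    IsNextNE (chainSE T) (pos T x) (pos R x) := by
  have hx₁ : x ∈ Finset.Icc 1 (numCells lam mu) := Finset.mem_Icc.mpr ⟨hx, hxn.le⟩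
  have hn₁ : numCells lam mu ∈ Finset.Icc 1 (numCells lam mu) :=
    Finset.mem_Icc.mpr ⟨hn, le_rfl⟩
  have hXx := (Finset.mem_filter.mp (hC ▸ hxC)).2
  have hNC : posN T ∈ chainSE T := by
    rw [hC]
    exact Finset.mem_filter.mpr ⟨mem_RpSE_posN hn,
      weakSW_trans hXx (hNE _ (Finset.filter_subset _ _ hxC))⟩
  have hnext := isNextNE_nextNE (isChain_chainSE hn) ⟨posN T, hNC,
    hNE _ (Finset.filter_subset _ _ hxC), fun h => by have := pos_injOn hx₁ hn₁ h; omega⟩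
  have hBX : nextNE (chainSE T) (pos T x) ≠ Xend T := fun h =>
    not_weakSW_of_swLT hnext.2.1 (h ▸ hXx)
  have hRB : R.entry (nextNE (chainSE T) (pos T x)) = x := by
    rw [hR, rotEntry, if_pos hnext.1, if_neg hBX, if_neg hSW,
      (hnext.isNextSW (isChain_chainSE hn) hxC).nextSW_eq, entry_pos hx₁]
  rwa [pos_eq_of_entry_eq (Finset.filter_subset _ _ (RpSE_subset_SEboundary hn
    (Finset.filter_subset _ _ hnext.1))) hRB]

theorem swRotation_of_SWmostAtN (hR : R.entry = rotEntry T) (hn : 1 ≤ numCells lam mu)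
    (hSW : SWmostAtN T) : SWRotation T R (numCells lam mu - kSE T + 1) (chainSE T) := by
  obtain ⟨hX, hXrow⟩ := Xend_spec_of_SWmostAtN hSW (mem_RpSE_Ycell hn)
  have hC := chainSE_eq_of_SWmostAtN hSW hX
  refine ⟨minUnimodalSE_RcSE T hn, fun hm => not_minUnimodalSE_Icc_pred_RcSE hm,
    Finset.filter_subset _ _, fun c hc hcC d hdC => ?_, fun c hcC hYc => ?_,
    fun x hx hxn hxC => isNextSW_pos_rotSE hR hn hSW hC hx hxn hxC,
    fun x hx hxC => pos_rotSE_of_not_mem hR hx hxC⟩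
  · have hcX : ¬ weakSW c (Xend T) := fun h => hcC (hC ▸ Finset.mem_filter.mpr ⟨hc, h⟩)
    have hXc := swLT_of_not_weakSW (weakSW_or_weakSW_of_mem_SEboundary
      (RpSE_subset_SEboundary hn hc) (RpSE_subset_SEboundary hn hX)) hcX
    rw [hC, Finset.mem_filter] at hdC
    exact weakSW_trans hdC.2 hXc.1
  · rw [hC, Finset.mem_filter] at hcC
    exact hXrow c hcC.1 hcC.2 hYc

theorem swRotation_transpose_of_not_SWmostAtN (hR : R.entry = rotEntry T)
    (hn : 1 ≤ numCells lam mu) (hSW : ¬ SWmostAtN T) :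
    SWRotation T.transpose R.transpose (numCells lam mu - kSE T + 1)
      ((chainSE T).image Prod.swap) := by
  have hNE := (SWmostAtN_or_NEmostAtN T hn).resolve_left hSW
  have hS := minUnimodalSE_RcSE T hn
  obtain ⟨hX, hXcol⟩ := Xend_spec_of_not_SWmostAtN hSW (mem_RpSE_Ycell hn)
  have hC := chainSE_eq_of_NEmostAtN hNE hX
  have hRpSE : (Finset.Icc (numCells lam mu - kSE T + 1)
      (numCells lam.transpose mu.transpose)).image (pos T.transpose) =
        (RpSE T).image Prod.swap := by
    rw [numCells_transpose, RpSE, Finset.image_image]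
    exact Finset.image_congr fun x hx => pos_transpose (hS.mem_Icc hx)
  have hswap : ∀ {c : Cell} {P : Finset Cell}, c.swap ∈ P.image Prod.swap ↔ c ∈ P :=
    Prod.swap_injective.mem_finset_image
  have hm₁ := hS.mem_Icc hS.left_mem
  refine ⟨?_, fun hm => ?_, ?_, ?_, fun c hcC hYc => ?_, fun x hx hxn hxC => ?_,
    fun x hx hxC => ?_⟩
  · rw [numCells_transpose, minUnimodalSE_transpose_iff]
    exact hS
  · rw [numCells_transpose, minUnimodalSE_transpose_iff]
    exact not_minUnimodalSE_Icc_pred_RcSE hm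
  · rw [hRpSE]
    exact Finset.image_subset_image (Finset.filter_subset _ _)
  · rw [hRpSE]
    intro c' hc' hcC d' hdC
    obtain ⟨c, hc, rfl⟩ := Finset.mem_image.mp hc'
    obtain ⟨d, hd, rfl⟩ := Finset.mem_image.mp hdC
    rw [hswap] at hcC
    rw [hC, Finset.mem_filter] at hd
    have hXc : ¬ weakSW (Xend T) c := fun h => hcC (hC ▸ Finset.mem_filter.mpr ⟨hc, h⟩)
    have hcX := swLT_of_not_weakSW (weakSW_or_weakSW_of_mem_SEboundary
      (RpSE_subset_SEboundary hn hX) (RpSE_subset_SEboundary hn hc)) hXc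
    exact weakSW_swap_swap.mpr (weakSW_trans hcX.1 hd.2)
  · obtain ⟨c, hc, rfl⟩ := Finset.mem_image.mp hcC
    clear hcC
    rw [pos_transpose hm₁, weakSW_swap_swap] at hYc
    rw [hC, Finset.mem_filter] at hc
    rw [pos_transpose hm₁, Prod.fst_swap, Prod.fst_swap]
    exact hXcol c hc.1 hc.2 hYc
  · rw [numCells_transpose] at hxn
    have hx₁ : x ∈ Finset.Icc 1 (numCells lam mu) := Finset.mem_Icc.mpr ⟨hx, hxn.le⟩
    rw [pos_transpose hx₁, hswap] at hxC
    rw [pos_transpose hx₁, pos_transpose hx₁]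
    exact (isNextNE_pos_rotSE hR hn hSW hNE hC hx hxn hxC).image_swap
  · rw [numCells_transpose] at hx
    rw [pos_transpose hx, hswap] at hxC
    rw [pos_transpose hx, pos_transpose hx, pos_rotSE_of_not_mem hR hx hxC]

end RotSE

theorem rotSE_preserve_descents_general (lam mu : YoungDiagram)
    (T R : SYT lam mu) (hR : R.entry = rotEntry T)
    (i : ℕ) (h1 : 1 ≤ i) (h2 : i ≤ numCells lam mu - 2) :
    i ∈ Des T ↔ i ∈ Des R := by
  have hn : 1 ≤ numCells lam mu := by omega
  rw [mem_Des_iff h1 (by omega), mem_Des_iff h1 (by omega)]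
  by_cases hSW : SWmostAtN T
  · exact (swRotation_of_SWmostAtN hR hn hSW).fst_lt_iff h1 (by omega)
  · have hi : i ∈ Finset.Icc 1 (numCells lam mu) := Finset.mem_Icc.mpr ⟨h1, by omega⟩
    have hi' : i + 1 ∈ Finset.Icc 1 (numCells lam mu) :=
      Finset.mem_Icc.mpr ⟨by omega, by omega⟩
    rw [← not_iff_not, ← fst_pos_transpose_lt_iff hi hi', ← fst_pos_transpose_lt_iff hi hi']
    exact (swRotation_transpose_of_not_SWmostAtN hR hn hSW).fst_lt_iff h1
      (by rw [numCells_transpose]; omega)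

/-- Proposition `rotse-preserve-descents`. For every
standard Young tableau `T` of shape `λ/μ` and every `i ∈ {1, …, n-2}`,
`i ∈ Des(T)` if and only if `i ∈ Des(Rot_SE(T))`. -/
theorem rotSE_preserve_descents (lam mu : YoungDiagram) (hsub : mu ≤ lam)
    (T R : SYT lam mu) (hR : R.entry = rotEntry T)
    (i : ℕ) (h1 : 1 ≤ i) (h2 : i ≤ numCells lam mu - 2) :
    i ∈ Des T ↔ i ∈ Des R :=
  rotSE_preserve_descents_general lam mu T R hR i h1 h2

end SkewSE
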